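/- Let Γ ⊊ Z^d be (K,Q)-relatively dense. Then the ground state energy of the Γ-trimmed discrete Laplacian satisfies the Cheeger-type bound E_Γ(-Δ) ≥ β(Γ)²/(4d) ≥ 1/(4d K_*^{2d}). -/

import Mathlib

/-
Summation by parts turns `⟨φ, -Δφ⟩` into the Dirichlet form `∑ₓ ∑ᵢ (φ x - φ (x + eᵢ))²`; for a
finite `A ⊆ Γᶜ` it makes `⟨χ_A, -Δχ_A⟩` the total variation of `χ_A`, which is at least `β(Γ)|A|`.
Writing a nonnegative `g` vanishing on `Γ` as a sum of layers `t χ_A` gives the coarea inequality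
`β(Γ) ∑ g ≤ TV(g)`. For `g = φ²` with `‖φ‖ = 1`, Cauchy–Schwarz applied to
`|a² - b²| = |a - b| |a + b|` together with `∑ₓ ∑ᵢ (φ x + φ (x + eᵢ))² ≤ 4d` gives
`β(Γ)² ≤ 4d ⟨φ, -Δφ⟩`.

For `β(Γ) ≥ K⁻ᵈ`, cut `ℤ^d` into cubes of side `K`; each contains a point of `Γ`. A cube that
meets `A ⊆ Γᶜ` contains a monotone lattice path from a point of `A` to a point of `Γ`, hence a
point of `A` with a neighbour outside `A`. So `|A| ≤ K^d · #(inner boundary of A) ≤ K^d ⟨χ_A, -Δχ_A⟩`.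
-/

open scoped BigOperators

noncomputable section

/-- `ℤ^d`. -/
abbrev Zd (d : ℕ) := Fin d → ℤ

/-- `ℓ¹` distance on `ℤ^d`. -/
def dist1 {d : ℕ} (x y : Zd d) : ℕ := ∑ i, (x i - y i).natAbs

/-- the `i`-th coordinate unit vector. -/
def unitVec {d : ℕ} (i : Fin d) : Zd d := fun j => if j = i then 1 else 0

/-- the negative discrete Laplacian: `(-Δφ)(x) = Σ_{‖x-y‖₁=1} (φ(x) - φ(y))`. -/
def negLap {d : ℕ} (φ : Zd d → ℝ) (x : Zd d) : ℝ :=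
  ∑ i, ((φ x - φ (x + unitVec i)) + (φ x - φ (x - unitVec i)))

/-- characteristic function of a set. -/
def chi {d : ℕ} (A : Set (Zd d)) : Zd d → ℝ := A.indicator fun _ => 1

/-- edge boundary `∂A = {(x,y) ∈ A × Aᶜ : ‖x-y‖₁ = 1}`. -/
def bdry {d : ℕ} (A : Set (Zd d)) : Set (Zd d × Zd d) :=
  {p | p.1 ∈ A ∧ p.2 ∉ A ∧ dist1 p.1 p.2 = 1}

/-- squared `ℓ²` norm (for finitely supported functions). -/
def norm2 {d : ℕ} (φ : Zd d → ℝ) : ℝ := ∑ᶠ x, φ x ^ 2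

/-- quadratic form `⟨φ, (-Δ + V)φ⟩` (for finitely supported `φ`). -/
def energy {d : ℕ} (V : Zd d → ℝ) (φ : Zd d → ℝ) : ℝ :=
  ∑ᶠ x, φ x * (negLap φ x + V x * φ x)

/-- `V` is a bounded potential. -/
def BddPot {d : ℕ} (V : Zd d → ℝ) : Prop := ∃ C, ∀ x, |V x| ≤ C

/-- the spread `spr(V) = sup V - inf V` of a bounded potential. -/
def spr {d : ℕ} (V : Zd d → ℝ) : ℝ := sSup (Set.range V) - sInf (Set.range V)

/-- `E_∅(H) = inf σ(-Δ + V)`, characterized variationally over normalized finitely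
supported functions. -/
def E0 {d : ℕ} (V : Zd d → ℝ) : ℝ :=
  sInf {r | ∃ φ : Zd d → ℝ, (Function.support φ).Finite ∧ norm2 φ = 1 ∧ r = energy V φ}

/-- `E_Γ(H) = inf σ(H_Γ)`, the ground state energy of the `Γ`-trimmed operator,
characterized variationally over normalized finitely supported functions vanishing on `Γ`. -/
def EG {d : ℕ} (V : Zd d → ℝ) (Γ : Set (Zd d)) : ℝ :=
  sInf {r | ∃ φ : Zd d → ℝ, (Function.support φ).Finite ∧ (∀ x ∈ Γ, φ x = 0) ∧
    norm2 φ = 1 ∧ r = energy V φ}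

/-- `E_Γ(H,t) = inf σ(H + t χ_Γ)`. -/
def EGt {d : ℕ} (V : Zd d → ℝ) (Γ : Set (Zd d)) (t : ℝ) : ℝ :=
  E0 fun x => V x + t * chi Γ x

/-- the open box `Λ⁰_K(ζ) = {y : ‖y-ζ‖_∞ < K/2}`. -/
def Lam0 {d : ℕ} (K : ℕ) (ζ : Zd d) : Set (Zd d) := {y | ∀ i, 2 * (y i - ζ i).natAbs < K}

/-- `Γ` is `(K,Q)`-relatively dense: `|Γ ∩ Λ⁰_K(ζ)| ≥ Q` for all `ζ ∈ KZ^d`. -/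
def RelDense {d : ℕ} (Γ : Set (Zd d)) (K Q : ℕ) : Prop :=
  ∀ z : Zd d, Q ≤ (Γ ∩ Lam0 K fun i => (K : ℤ) * z i).ncard

/-- `K_* = K` if `K` is odd, `K+1` if `K` is even. -/
def Kstar (K : ℕ) : ℕ := if K % 2 = 1 then K else K + 1

/-- `⟨χ_A, (-Δ)χ_A⟩` for a finite set `A`; for `A ⊆ Γᶜ` this coincides with
`⟨χ_A, (-Δ_Γ)χ_A⟩` for the `Γ`-trimmed Laplacian. -/
def qform {d : ℕ} (A : Finset (Zd d)) : ℝ := ∑ x ∈ A, negLap (chi ↑A) x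

/-- Cheeger constant `β(Γ)` of the `Γ`-trimmed Laplacian. -/
def betaG {d : ℕ} (Γ : Set (Zd d)) : ℝ :=
  sInf {r | ∃ A : Finset (Zd d), A.Nonempty ∧ (↑A : Set (Zd d)) ⊆ Γᶜ ∧
    r = qform A / A.card}

/-- `⟨χ_A, H(t)χ_A⟩ = ⟨χ_A, (-Δ)χ_A⟩ + t|A ∩ Γ|` for a finite set `A`. -/
def qformT {d : ℕ} (Γ : Set (Zd d)) (t : ℝ) (A : Finset (Zd d)) : ℝ :=
  qform A + t * ((↑A ∩ Γ : Set (Zd d)).ncard)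

/-- Cheeger constant `β(t)` of `H(t) = -Δ + t χ_Γ`. -/
def betaT {d : ℕ} (Γ : Set (Zd d)) (t : ℝ) : ℝ :=
  sInf {r | ∃ A : Finset (Zd d), A.Nonempty ∧ r = qformT Γ t A / A.card}

/-- the box `Λ_L(x₀) = {y : ‖y-x₀‖_∞ ≤ L/2}`. -/
def box {d : ℕ} (L : ℕ) (x₀ : Zd d) : Set (Zd d) := {y | ∀ i, 2 * (y i - x₀ i).natAbs ≤ L}

/-- `φ` is an eigenfunction of `H_Λ = (-Δ + V)_Λ` with eigenvalue `E`. -/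
def eigOn {d : ℕ} (V : Zd d → ℝ) (Λ : Set (Zd d)) (φ : Zd d → ℝ) (E : ℝ) : Prop :=
  (∀ x ∉ Λ, φ x = 0) ∧ ∀ x ∈ Λ, negLap φ x + V x * φ x = E * φ x

/-- `E^Λ = inf σ(H_Λ)`, variationally. -/
def Ebox {d : ℕ} (V : Zd d → ℝ) (Λ : Set (Zd d)) : ℝ :=
  sInf {r | ∃ φ : Zd d → ℝ, (∀ x ∉ Λ, φ x = 0) ∧ norm2 φ = 1 ∧ r = energy V φ}

open Function

lemma finsum_comp_add_right {α M : Type*} [AddGroup α] [AddCommMonoid M] (f : α → M) (v : α) :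
    ∑ᶠ x, f (x + v) = ∑ᶠ x, f x :=
  finsum_comp_equiv (Equiv.addRight v)

lemma sq_sum_abs_sq_sub_sq_le {ι : Type*} (s : Finset ι) (a b : ι → ℝ) :
    (∑ i ∈ s, |a i ^ 2 - b i ^ 2|) ^ 2 ≤
      (∑ i ∈ s, (a i - b i) ^ 2) * (2 * ∑ i ∈ s, (a i ^ 2 + b i ^ 2)) := by
  calc (∑ i ∈ s, |a i ^ 2 - b i ^ 2|) ^ 2 = (∑ i ∈ s, |a i - b i| * |a i + b i|) ^ 2 := by
        congr 1
        exact Finset.sum_congr rfl fun i _ => by rw [← abs_mul]; ring_nf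
    _ ≤ (∑ i ∈ s, |a i - b i| ^ 2) * ∑ i ∈ s, |a i + b i| ^ 2 :=
        Finset.sum_mul_sq_le_sq_mul_sq _ _ _
    _ ≤ (∑ i ∈ s, (a i - b i) ^ 2) * (2 * ∑ i ∈ s, (a i ^ 2 + b i ^ 2)) := by
        simp only [sq_abs]
        gcongr
        rw [Finset.mul_sum]
        gcongr with i
        nlinarith [sq_nonneg (a i - b i)]

section

variable {d : ℕ}

def dirichletForm (φ : Zd d → ℝ) : ℝ := ∑ᶠ x, ∑ i, (φ x - φ (x + unitVec i)) ^ 2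

def totalVariation (g : Zd d → ℝ) : ℝ := ∑ᶠ x, ∑ i, |g x - g (x + unitVec i)|

lemma dirichletForm_nonneg (φ : Zd d → ℝ) : 0 ≤ dirichletForm φ :=
  finsum_nonneg fun _ => Finset.sum_nonneg fun _ _ => sq_nonneg _

lemma totalVariation_nonneg (g : Zd d → ℝ) : 0 ≤ totalVariation g :=
  finsum_nonneg fun _ => Finset.sum_nonneg fun _ _ => abs_nonneg _

def edgeSupport (φ : Zd d → ℝ) : Set (Zd d) :=
  support φ ∪ ⋃ i, (· + unitVec i) ⁻¹' support φ

lemma edgeSupport_finite {φ : Zd d → ℝ} (hφ : (support φ).Finite) : (edgeSupport φ).Finite :=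
  hφ.union (Set.finite_iUnion fun _ => hφ.preimage (add_left_injective _).injOn)

lemma support_edge_subset (φ : Zd d → ℝ) {F : ℝ → ℝ → ℝ} (hF : F 0 0 = 0) (i : Fin d) :
    support (fun x => F (φ x) (φ (x + unitVec i))) ⊆ edgeSupport φ := by
  intro x hx
  by_contra h
  simp only [edgeSupport, Set.mem_union, mem_support, Set.mem_iUnion, Set.mem_preimage, not_or,
    not_exists, not_not] at h
  exact hx (by simp only [h.1, h.2 i, hF])

lemma support_sum_edge_subset (φ : Zd d → ℝ) {F : ℝ → ℝ → ℝ} (hF : F 0 0 = 0) :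
    support (fun x => ∑ i, F (φ x) (φ (x + unitVec i))) ⊆ edgeSupport φ :=
  (Finset.support_sum _ _).trans (Set.iUnion₂_subset fun i _ => support_edge_subset φ hF i)

lemma finite_support_sum_edge {φ : Zd d → ℝ} (hφ : (support φ).Finite) {F : ℝ → ℝ → ℝ}
    (hF : F 0 0 = 0) : (support fun x => ∑ i, F (φ x) (φ (x + unitVec i))).Finite :=
  (edgeSupport_finite hφ).subset (support_sum_edge_subset φ hF)

lemma finsum_mul_sub_add_sub_eq_finsum_sq {φ : Zd d → ℝ} (hφ : (support φ).Finite) (v : Zd d) :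
    ∑ᶠ x, φ x * ((φ x - φ (x + v)) + (φ x - φ (x - v))) = ∑ᶠ x, (φ x - φ (x + v)) ^ 2 := by
  have h₁ : (support fun x => φ x * (φ x - φ (x + v))).Finite :=
    hφ.subset (support_mul_subset_left _ _)
  have h₂ : (support fun x => φ x * (φ x - φ (x - v))).Finite :=
    hφ.subset (support_mul_subset_left _ _)
  have h₃ : (support fun x => φ (x + v) * (φ (x + v) - φ x)).Finite :=
    (hφ.preimage (add_left_injective v).injOn).subset (support_mul_subset_left _ _)
  calc ∑ᶠ x, φ x * ((φ x - φ (x + v)) + (φ x - φ (x - v)))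
      = ∑ᶠ x, φ x * (φ x - φ (x + v)) + ∑ᶠ x, φ x * (φ x - φ (x - v)) := by
        simp only [mul_add]
        exact finsum_add_distrib h₁ h₂
    _ = ∑ᶠ x, φ x * (φ x - φ (x + v)) + ∑ᶠ x, φ (x + v) * (φ (x + v) - φ x) := by
        rw [← finsum_comp_add_right (fun x => φ x * (φ x - φ (x - v))) v]
        simp only [add_sub_cancel_right]
    _ = ∑ᶠ x, (φ x - φ (x + v)) ^ 2 := by
        rw [← finsum_add_distrib h₁ h₃]
        exact finsum_congr fun x => by ring

lemma energy_zero_eq_dirichletForm {φ : Zd d → ℝ} (hφ : (support φ).Finite) :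
    energy (fun _ => 0) φ = dirichletForm φ := by
  calc energy (fun _ => 0) φ
      = ∑ᶠ x, ∑ i, φ x * ((φ x - φ (x + unitVec i)) + (φ x - φ (x - unitVec i))) := by
        simp only [energy, negLap, zero_mul, add_zero, Finset.mul_sum]
    _ = ∑ i, ∑ᶠ x, φ x * ((φ x - φ (x + unitVec i)) + (φ x - φ (x - unitVec i))) :=
        finsum_sum_comm _ _ fun _ _ => hφ.subset (support_mul_subset_left _ _)
    _ = ∑ i, ∑ᶠ x, (φ x - φ (x + unitVec i)) ^ 2 := by
        simp only [finsum_mul_sub_add_sub_eq_finsum_sq hφ]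
    _ = dirichletForm φ :=
        (finsum_sum_comm _ _ fun i _ => (edgeSupport_finite hφ).subset
          (support_edge_subset φ (F := fun a b => (a - b) ^ 2) (by norm_num) i)).symm

lemma totalVariation_sq_le {φ : Zd d → ℝ} (hφ : (support φ).Finite) :
    totalVariation (fun x => φ x ^ 2) ^ 2 ≤ 4 * d * norm2 φ * dirichletForm φ := by
  set S := (edgeSupport_finite hφ).toFinset
  have hS : edgeSupport φ ⊆ S := by simp [S]
  have hsq : ∑ x ∈ S, φ x ^ 2 = norm2 φ :=
    (finsum_eq_sum_of_support_subset _ fun x hx => hS (Or.inl (by simpa using hx))).symm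
  have hsq_shift : ∀ i, ∑ x ∈ S, φ (x + unitVec i) ^ 2 = norm2 φ := fun i => by
    rw [← finsum_eq_sum_of_support_subset _
      ((support_edge_subset φ (F := fun _ b => b ^ 2) (by norm_num) i).trans hS),
      finsum_comp_add_right (fun x => φ x ^ 2)]
    rfl
  have hpairs : ∑ p ∈ S ×ˢ Finset.univ, (φ p.1 ^ 2 + φ (p.1 + unitVec p.2) ^ 2) =
      2 * d * norm2 φ := by
    simp only [Finset.sum_product, Finset.sum_add_distrib, Finset.sum_const, Finset.card_univ,
      Fintype.card_fin, nsmul_eq_mul, ← Finset.mul_sum, hsq]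
    rw [Finset.sum_comm]
    simp only [hsq_shift, Finset.sum_const, Finset.card_univ, Fintype.card_fin, nsmul_eq_mul]
    ring
  calc totalVariation (fun x => φ x ^ 2) ^ 2
      = (∑ p ∈ S ×ˢ Finset.univ, |φ p.1 ^ 2 - φ (p.1 + unitVec p.2) ^ 2|) ^ 2 := by
        rw [totalVariation, Finset.sum_product, finsum_eq_sum_of_support_subset _
          ((support_sum_edge_subset φ (F := fun a b => |a ^ 2 - b ^ 2|) (by norm_num)).trans hS)]
    _ ≤ (∑ p ∈ S ×ˢ Finset.univ, (φ p.1 - φ (p.1 + unitVec p.2)) ^ 2) *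
        (2 * ∑ p ∈ S ×ˢ Finset.univ, (φ p.1 ^ 2 + φ (p.1 + unitVec p.2) ^ 2)) :=
        sq_sum_abs_sq_sub_sq_le _ _ _
    _ = 4 * d * norm2 φ * dirichletForm φ := by
        rw [hpairs, dirichletForm, finsum_eq_sum_of_support_subset _
          ((support_sum_edge_subset φ (F := fun a b => (a - b) ^ 2) (by norm_num)).trans hS),
          Finset.sum_product]
        ring

lemma chi_of_mem {A : Set (Zd d)} {x : Zd d} (hx : x ∈ A) : chi A x = 1 :=
  Set.indicator_of_mem hx _

lemma chi_of_notMem {A : Set (Zd d)} {x : Zd d} (hx : x ∉ A) : chi A x = 0 :=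
  Set.indicator_of_notMem hx _

lemma chi_le_one (A : Set (Zd d)) (x : Zd d) : chi A x ≤ 1 := by
  by_cases hx : x ∈ A <;> simp [chi_of_mem, chi_of_notMem, hx]

lemma sq_chi_sub_chi (A : Set (Zd d)) (x y : Zd d) :
    (chi A x - chi A y) ^ 2 = |chi A x - chi A y| := by
  by_cases hx : x ∈ A <;> by_cases hy : y ∈ A <;> simp [chi_of_mem, chi_of_notMem, hx, hy]

lemma finite_support_chi (A : Finset (Zd d)) : (support (chi (A : Set (Zd d)))).Finite :=
  A.finite_toSet.subset Set.support_indicator_subset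

lemma finsum_chi (A : Finset (Zd d)) : ∑ᶠ x, chi (A : Set (Zd d)) x = A.card := by
  rw [chi, ← finsum_mem_def, finsum_mem_coe_finset]
  simp

lemma qform_eq_energy (A : Finset (Zd d)) :
    qform A = energy (fun _ => 0) (chi (A : Set (Zd d))) := by
  rw [energy, finsum_eq_sum_of_support_subset (s := A)]
  · exact Finset.sum_congr rfl fun x hx => by simp [chi_of_mem (Finset.mem_coe.2 hx)]
  · intro x hx
    by_contra h
    exact hx (by simp [chi_of_notMem h])

lemma qform_eq_totalVariation (A : Finset (Zd d)) :
    qform A = totalVariation (chi (A : Set (Zd d))) := by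
  rw [qform_eq_energy, energy_zero_eq_dirichletForm (finite_support_chi A), dirichletForm,
    totalVariation]
  simp only [sq_chi_sub_chi]

lemma betaG_le {Γ : Set (Zd d)} {A : Finset (Zd d)} (hA : A.Nonempty)
    (hAΓ : (A : Set (Zd d)) ⊆ Γᶜ) : betaG Γ ≤ qform A / A.card := by
  refine csInf_le ⟨0, ?_⟩ ⟨A, hA, hAΓ, rfl⟩
  rintro r ⟨B, -, -, rfl⟩
  rw [qform_eq_totalVariation]
  exact div_nonneg (totalVariation_nonneg _) (Nat.cast_nonneg _)

lemma betaG_mul_card_le_totalVariation {Γ : Set (Zd d)} {A : Finset (Zd d)} (hA : A.Nonempty)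
    (hAΓ : (A : Set (Zd d)) ⊆ Γᶜ) : betaG Γ * A.card ≤ totalVariation (chi (A : Set (Zd d))) := by
  rw [← qform_eq_totalVariation, ← le_div_iff₀ (by exact_mod_cast hA.card_pos)]
  exact betaG_le hA hAΓ

lemma totalVariation_eq_add_layer {g : Zd d → ℝ} {A : Set (Zd d)} (hA : A.Finite) {t : ℝ}
    (ht : 0 ≤ t) (hgA : ∀ x ∈ A, t ≤ g x) (hg0 : ∀ x ∉ A, g x = 0) :
    totalVariation g =
      totalVariation (fun x => g x - t * chi A x) + t * totalVariation (chi A) := by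
  have hlayer : ∀ x y, |g x - g y| =
      |(g x - t * chi A x) - (g y - t * chi A y)| + t * |chi A x - chi A y| := by
    intro x y
    by_cases hx : x ∈ A <;> by_cases hy : y ∈ A
    · simp [chi_of_mem, hx, hy]
    · simp [chi_of_mem, chi_of_notMem, hx, hy, hg0 y hy]
      rw [abs_of_nonneg (ht.trans (hgA x hx)), abs_of_nonneg (sub_nonneg.2 (hgA x hx))]
      ring
    · simp [chi_of_mem, chi_of_notMem, hx, hy, hg0 x hx]
      rw [abs_of_nonneg (ht.trans (hgA y hy)), abs_sub_comm,
        abs_of_nonneg (sub_nonneg.2 (hgA y hy))]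
      ring
    · simp [chi_of_notMem, hx, hy, hg0 x hx, hg0 y hy]
  have hfin : (support fun x => g x - t * chi A x).Finite := by
    refine hA.subset fun x hx => ?_
    by_contra h
    exact hx (by simp [hg0 x h, chi_of_notMem h])
  rw [totalVariation, totalVariation, totalVariation, mul_finsum, ← finsum_add_distrib
    (finite_support_sum_edge hfin (F := fun a b => |a - b|) (by norm_num))]
  · refine finsum_congr fun x => ?_
    simp only [Finset.mul_sum, ← Finset.sum_add_distrib, hlayer]
  · exact (finite_support_sum_edge (hA.subset Set.support_indicator_subset)
      (F := fun a b => |a - b|) (by norm_num)).subset (support_mul_subset_right _ _)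

/- Subtracting the bottom layer `t χ_A`, with `A = supp g` and `t = min_A g`, kills `g` at a
minimiser, so we induct on the size of the support. -/
lemma betaG_mul_finsum_le_totalVariation (Γ : Set (Zd d)) {g : Zd d → ℝ}
    (hg : (support g).Finite) (hpos : ∀ x, 0 ≤ g x) (hΓ : ∀ x ∈ Γ, g x = 0) :
    betaG Γ * ∑ᶠ x, g x ≤ totalVariation g := by
  induction hn : hg.toFinset.card using Nat.strong_induction_on generalizing g with
  | _ n ih =>
  set A := hg.toFinset
  have hA : ∀ x, x ∈ A ↔ g x ≠ 0 := fun x => by simp [A]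
  rcases A.eq_empty_or_nonempty with hAe | hAne
  · have : g = 0 := funext fun x => by simpa [hAe] using hA x
    subst this
    simp [totalVariation]
  obtain ⟨x₀, hx₀, ht⟩ := Finset.exists_mem_eq_inf' hAne g
  set t := A.inf' hAne g
  set g' := fun x => g x - t * chi (A : Set (Zd d)) x
  have hg0 : ∀ x ∉ A, g x = 0 := fun x hx => by simpa [hA] using hx
  have hgA : ∀ x ∈ A, t ≤ g x := fun x hx => Finset.inf'_le g hx
  have ht0 : 0 ≤ t := ht ▸ hpos x₀
  have hAΓ : (A : Set (Zd d)) ⊆ Γᶜ := fun x hx hxΓ => (hA x).1 hx (hΓ x hxΓ)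
  have hg'_of_notMem : ∀ x ∉ A, g' x = 0 := fun x hx => by
    simp [g', hg0 x hx, chi_of_notMem (Finset.mem_coe.not.2 hx)]
  have hsupp' : support g' ⊆ A.erase x₀ := by
    intro x hx
    by_contra h
    apply hx
    rcases eq_or_ne x x₀ with rfl | hne
    · simp [g', chi_of_mem (Finset.mem_coe.2 hx₀), ht]
    · exact hg'_of_notMem x fun hxA => h (Finset.mem_erase.2 ⟨hne, hxA⟩)
  have hg' : (support g').Finite := (A.erase x₀).finite_toSet.subset hsupp'
  have hcard : hg'.toFinset.card < n := hn ▸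
    (Finset.card_le_card (by simpa using hsupp')).trans_lt (Finset.card_erase_lt_of_mem hx₀)
  have hg'_nonneg : ∀ x, 0 ≤ g' x := fun x => by
    by_cases hx : x ∈ A
    · simp [g', chi_of_mem (Finset.mem_coe.2 hx), hgA x hx]
    · simp [hg'_of_notMem x hx]
  have IH := ih _ hcard hg' hg'_nonneg (fun x hxΓ => hg'_of_notMem x fun hx => hAΓ hx hxΓ) rfl
  have hsum : ∑ᶠ x, g x = ∑ᶠ x, g' x + t * A.card := by
    rw [← finsum_chi, mul_finsum, ← finsum_add_distrib hg'
      ((finite_support_chi A).subset (support_mul_subset_right _ _))]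
    exact finsum_congr fun x => by ring
  calc betaG Γ * ∑ᶠ x, g x = betaG Γ * ∑ᶠ x, g' x + t * (betaG Γ * A.card) := by
        rw [hsum]
        ring
    _ ≤ totalVariation g' + t * totalVariation (chi (A : Set (Zd d))) :=
        add_le_add IH (mul_le_mul_of_nonneg_left (betaG_mul_card_le_totalVariation hAne hAΓ) ht0)
    _ = totalVariation g := (totalVariation_eq_add_layer A.finite_toSet ht0 hgA hg0).symm

lemma betaG_sq_div_le_energy {Γ : Set (Zd d)} (hβ : 0 ≤ betaG Γ) {φ : Zd d → ℝ}
    (hφ : (support φ).Finite) (hΓφ : ∀ x ∈ Γ, φ x = 0) (hnorm : norm2 φ = 1) :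
    betaG Γ ^ 2 / (4 * d) ≤ energy (fun _ => 0) φ := by
  have hβ_le : betaG Γ ≤ totalVariation (fun x => φ x ^ 2) := by
    have := betaG_mul_finsum_le_totalVariation Γ (hφ.subset fun x hx => by simpa using hx)
      (fun x => sq_nonneg (φ x)) (fun x hx => by simp [hΓφ x hx])
    rwa [show ∑ᶠ x, φ x ^ 2 = norm2 φ from rfl, hnorm, mul_one] at this
  rw [energy_zero_eq_dirichletForm hφ]
  refine div_le_of_le_mul₀ (by positivity) (dirichletForm_nonneg φ) ?_
  calc betaG Γ ^ 2 ≤ totalVariation (fun x => φ x ^ 2) ^ 2 := pow_le_pow_left₀ hβ hβ_le 2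
    _ ≤ 4 * d * norm2 φ * dirichletForm φ := totalVariation_sq_le hφ
    _ = dirichletForm φ * (4 * d) := by rw [hnorm]; ring

lemma le_EG {V : Zd d → ℝ} {Γ : Set (Zd d)} (hΓ : Γ ≠ Set.univ) {c : ℝ}
    (h : ∀ φ : Zd d → ℝ, (support φ).Finite → (∀ x ∈ Γ, φ x = 0) → norm2 φ = 1 →
      c ≤ energy V φ) :
    c ≤ EG V Γ := by
  obtain ⟨x₀, hx₀⟩ := (Set.ne_univ_iff_exists_notMem Γ).1 hΓ
  refine le_csInf ⟨_, Pi.single x₀ 1, ?_, fun x hx => ?_, ?_, rfl⟩ ?_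
  · exact (Set.finite_singleton x₀).subset Pi.support_single_subset
  · exact Pi.single_eq_of_ne (by rintro rfl; exact hx₀ hx) _
  · rw [norm2, finsum_eq_single _ x₀ fun x hx => by simp [Pi.single_eq_of_ne hx]]
    simp
  · rintro r ⟨φ, hφ, hΓφ, hnorm, rfl⟩
    exact h φ hφ hΓφ hnorm

def innerBdry (A : Finset (Zd d)) : Finset (Zd d) :=
  A.filter fun x => ∃ i, x + unitVec i ∉ A ∨ x - unitVec i ∉ A

lemma negLap_chi_of_mem {A : Set (Zd d)} {x : Zd d} (hx : x ∈ A) :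
    negLap (chi A) x = ∑ i, ((1 - chi A (x + unitVec i)) + (1 - chi A (x - unitVec i))) := by
  simp only [negLap, chi_of_mem hx]

lemma card_innerBdry_le_qform (A : Finset (Zd d)) : ((innerBdry A).card : ℝ) ≤ qform A := by
  have hterm : ∀ x i, 0 ≤ (1 - chi (A : Set (Zd d)) (x + unitVec i)) +
      (1 - chi (A : Set (Zd d)) (x - unitVec i)) := fun x i =>
    add_nonneg (sub_nonneg.2 (chi_le_one _ _)) (sub_nonneg.2 (chi_le_one _ _))
  calc ((innerBdry A).card : ℝ) = ∑ x ∈ innerBdry A, 1 := by simp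
    _ ≤ ∑ x ∈ innerBdry A, negLap (chi (A : Set (Zd d))) x := by
        refine Finset.sum_le_sum fun x hx => ?_
        obtain ⟨hxA, i, hi⟩ := Finset.mem_filter.1 hx
        rw [negLap_chi_of_mem (Finset.mem_coe.2 hxA)]
        refine le_trans ?_ (Finset.single_le_sum (fun j _ => hterm x j) (Finset.mem_univ i))
        rcases hi with hi | hi <;> simp [chi_of_notMem (Finset.mem_coe.not.2 hi), chi_le_one]
    _ ≤ qform A := by
        refine Finset.sum_le_sum_of_subset_of_nonneg (Finset.filter_subset _ _) fun x hx _ => ?_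
        rw [negLap_chi_of_mem (Finset.mem_coe.2 hx)]
        exact Finset.sum_nonneg fun i _ => hterm x i

lemma exists_neighbor_mem_uIcc_dist1_lt {x y : Zd d} (hxy : x ≠ y) :
    ∃ j, ∃ x', (x' = x + unitVec j ∨ x' = x - unitVec j) ∧ x' ∈ Set.uIcc x y ∧
      dist1 x' y < dist1 x y := by
  obtain ⟨j, hj⟩ : ∃ j, x j ≠ y j := by
    by_contra! h
    exact hxy (funext h)
  rcases hj.lt_or_gt with hlt | hgt
  on_goal 1 => refine ⟨j, x + unitVec j, .inl rfl, ?_, ?_⟩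
  on_goal 3 => refine ⟨j, x - unitVec j, .inr rfl, ?_, ?_⟩
  all_goals
    simp only [Set.uIcc, Set.mem_Icc, Pi.le_def, Pi.inf_apply, Pi.sup_apply, Pi.add_apply,
      Pi.sub_apply, dist1, unitVec]
    first
      | constructor <;> intro i
      | refine Finset.sum_lt_sum (fun i _ => ?_) ⟨j, Finset.mem_univ j, ?_⟩
  all_goals split_ifs with h <;> (try subst h) <;> omega

lemma exists_mem_innerBdry_mem_uIcc {A : Finset (Zd d)} {x y : Zd d} (hx : x ∈ A)
    (hy : y ∉ A) : ∃ w ∈ innerBdry A, w ∈ Set.uIcc x y := by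
  induction hn : dist1 x y using Nat.strong_induction_on generalizing x with
  | _ n ih =>
  obtain ⟨j, x', hnb, hx'I, hlt⟩ :=
    exists_neighbor_mem_uIcc_dist1_lt (show x ≠ y by rintro rfl; exact hy hx)
  by_cases hx' : x' ∈ A
  · obtain ⟨w, hw, hwI⟩ := ih _ (hn ▸ hlt) hx' rfl
    exact ⟨w, hw, Set.uIcc_subset_uIcc hx'I Set.right_mem_uIcc hwI⟩
  · refine ⟨x, Finset.mem_filter.2 ⟨hx, j, ?_⟩, Set.left_mem_uIcc⟩
    rcases hnb with rfl | rfl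
    exacts [.inl hx', .inr hx']

/-- The offset `⌊(K - 1)/2⌋` makes the cube `{y | tileIdx K y = z}` of side `K` contain
`Λ⁰_K(K z)`. -/
def tileIdx (K : ℕ) (y : Zd d) : Zd d := fun i => (y i + ((K - 1) / 2 : ℕ)) / K

lemma tileIdx_eq_iff {K : ℕ} (hK : 0 < K) {y z : Zd d} :
    tileIdx K y = z ↔
      ∀ i, z i * K ≤ y i + ((K - 1) / 2 : ℕ) ∧ y i + ((K - 1) / 2 : ℕ) < z i * K + K := by
  simp only [funext_iff, tileIdx, Int.ediv_eq_iff_of_pos (Int.natCast_pos.2 hK)]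

lemma tileIdx_of_mem_Lam0 {K : ℕ} (hK : 0 < K) {y z : Zd d}
    (hy : y ∈ Lam0 K fun i => (K : ℤ) * z i) : tileIdx K y = z := by
  rw [tileIdx_eq_iff hK]
  intro i
  have hyi : 2 * (y i - K * z i).natAbs < K := hy i
  have := mul_comm (K : ℤ) (z i)
  omega

lemma tileIdx_eq_of_mem_uIcc {K : ℕ} (hK : 0 < K) {x y u z : Zd d} (hx : tileIdx K x = z)
    (hy : tileIdx K y = z) (hu : u ∈ Set.uIcc x y) : tileIdx K u = z := by
  rw [tileIdx_eq_iff hK] at hx hy ⊢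
  simp only [Set.uIcc, Set.mem_Icc, Pi.le_def, Pi.inf_apply, Pi.sup_apply] at hu
  intro i
  have := hx i
  have := hy i
  have := hu.1 i
  have := hu.2 i
  omega

lemma card_filter_tileIdx_eq_le {K : ℕ} (hK : 0 < K) (A : Finset (Zd d)) (z : Zd d) :
    (A.filter fun x => tileIdx K x = z).card ≤ K ^ d := by
  set c : ℤ := (((K - 1) / 2 : ℕ) : ℤ)
  calc (A.filter fun x => tileIdx K x = z).card
      ≤ (Fintype.piFinset fun i => Finset.Ico (z i * K - c) (z i * K - c + K)).card := by
        refine Finset.card_le_card fun x hx => ?_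
        have := (tileIdx_eq_iff hK).1 (Finset.mem_filter.1 hx).2
        simp only [Fintype.mem_piFinset, Finset.mem_Ico]
        intro i
        have := this i
        omega
    _ = K ^ d := by simp [Int.card_Ico]

lemma card_le_pow_mul_qform {K Q : ℕ} (hK : 0 < K) (hQ : 0 < Q) {Γ : Set (Zd d)}
    (hΓ : RelDense Γ K Q) {A : Finset (Zd d)} (hAΓ : (A : Set (Zd d)) ⊆ Γᶜ) :
    (A.card : ℝ) ≤ K ^ d * qform A := by
  have hsurj : Set.SurjOn (tileIdx K) (innerBdry A : Set (Zd d))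
      (A.image (tileIdx K) : Set (Zd d)) := by
    intro z hz
    obtain ⟨x, hxA, rfl⟩ := Finset.mem_image.1 (Finset.mem_coe.1 hz)
    obtain ⟨γ, hγΓ, hγ⟩ : (Γ ∩ Lam0 K fun i => (K : ℤ) * tileIdx K x i).Nonempty :=
      Set.nonempty_of_ncard_ne_zero (hQ.trans_le (hΓ _)).ne'
    obtain ⟨w, hw, hwI⟩ := exists_mem_innerBdry_mem_uIcc hxA fun h => hAΓ h hγΓ
    exact ⟨w, hw, tileIdx_eq_of_mem_uIcc hK rfl (tileIdx_of_mem_Lam0 hK hγ) hwI⟩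
  have hcard : A.card ≤ K ^ d * (innerBdry A).card :=
    (Finset.card_le_mul_card_image A _ fun z _ => card_filter_tileIdx_eq_le hK A z).trans
      (Nat.mul_le_mul_left _ (Finset.card_le_card_of_surjOn _ hsurj))
  calc (A.card : ℝ) ≤ K ^ d * (innerBdry A).card := by exact_mod_cast hcard
    _ ≤ K ^ d * qform A := by gcongr; exact card_innerBdry_le_qform A

lemma one_div_pow_le_betaG {K Q : ℕ} (hK : 0 < K) (hQ : 0 < Q) {Γ : Set (Zd d)}
    (hne : Γ ≠ Set.univ) (hΓ : RelDense Γ K Q) : 1 / (K : ℝ) ^ d ≤ betaG Γ := by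
  obtain ⟨x₀, hx₀⟩ := (Set.ne_univ_iff_exists_notMem Γ).1 hne
  refine le_csInf ⟨_, {x₀}, Finset.singleton_nonempty x₀, by simpa using hx₀, rfl⟩ ?_
  rintro r ⟨A, hA, hAΓ, rfl⟩
  rw [div_le_div_iff₀ (by positivity) (by exact_mod_cast hA.card_pos), one_mul, mul_comm]
  exact card_le_pow_mul_qform hK hQ hΓ hAΓ

end

lemma le_Kstar (K : ℕ) : K ≤ Kstar K := by
  unfold Kstar
  split_ifs <;> omega

theorem stmt15_general (d K Q : ℕ) (hK : 0 < K) (hQ : 0 < Q)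
    (Γ : Set (Zd d)) (hne : Γ ≠ Set.univ) (hΓ : RelDense Γ K Q) :
    betaG Γ ^ 2 / (4 * d) ≤ EG (fun _ => 0) Γ ∧
    1 / (4 * (d : ℝ) * (Kstar K : ℝ) ^ (2 * d)) ≤ betaG Γ ^ 2 / (4 * d) := by
  have hβ : 1 / (Kstar K : ℝ) ^ d ≤ betaG Γ := by
    refine le_trans ?_ (one_div_pow_le_betaG hK hQ hne hΓ)
    gcongr
    exact_mod_cast le_Kstar K
  have hβ_nonneg : 0 ≤ betaG Γ := le_trans (by positivity) hβ
  refine ⟨le_EG hne fun φ hφ hΓφ hnorm => betaG_sq_div_le_energy hβ_nonneg hφ hΓφ hnorm, ?_⟩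
  calc 1 / (4 * (d : ℝ) * (Kstar K : ℝ) ^ (2 * d)) = (1 / (Kstar K : ℝ) ^ d) ^ 2 / (4 * d) := by
        rw [div_pow, one_pow, ← pow_mul, div_div, mul_comm d 2, mul_comm]
    _ ≤ betaG Γ ^ 2 / (4 * d) := by gcongr

/-- Cheeger bound `E_Γ(-Δ) ≥ β(Γ)²/(4d) ≥ 1/(4d K_*^{2d})`. -/
theorem stmt15 (d K Q : ℕ) (hd : 0 < d) (hK : 0 < K) (hQ : 0 < Q)
    (Γ : Set (Zd d)) (hne : Γ ≠ Set.univ) (hΓ : RelDense Γ K Q) :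
    betaG Γ ^ 2 / (4 * d) ≤ EG (fun _ => 0) Γ ∧
    1 / (4 * (d : ℝ) * (Kstar K : ℝ) ^ (2 * d)) ≤ betaG Γ ^ 2 / (4 * d) :=
  stmt15_general d K Q hK hQ Γ hne hΓ
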